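/- arXiv:2511.03505 — 4 statements merged into one kernel-verified Lean document; each statement's English description precedes it below -/
import Mathlib

section
/- Let k be the algebraic closure of the field with 2 elements and let G = SL₂(k). Then G is co-Hopfian as a group: every injective group homomorphism from G to G is surjective (hence an automorphism). -/
set_option linter.unnecessarySeqFocus false
set_option linter.unreachableTactic false
set_option linter.unusedTactic false
set_option maxHeartbeats 1000000

/-- `kbar` is the algebraic closure of the 2-element field. -/
noncomputable abbrev kbar : Type := AlgebraicClosure (ZMod 2)

/-- `G` is the special linear group `SL₂(kbar)`. -/
abbrev G : Type := Matrix.SpecialLinearGroup (Fin 2) kbar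

namespace SL2Aux
open Matrix Polynomial

lemma h2 : (2 : kbar) = 0 := CharTwo.two_eq_zero

lemma exists_om : ∃ z : kbar, z ^ 2 + z + 1 = 0 := by
  have hdeg : (X ^ 2 + X + C 1 : kbar[X]).degree = 2 := by compute_degree!
  obtain ⟨z, hz⟩ := IsAlgClosed.exists_root (k := kbar) (X ^ 2 + X + C 1)
    (by rw [hdeg]; norm_num)
  exact ⟨z, by simpa using hz⟩

noncomputable def om : kbar := (exists_om).choose
lemma hom : om ^ 2 + om + 1 = 0 := (exists_om).choose_spec
lemma hom2 : om ^ 2 = om + 1 := by linear_combination hom - (om + 1) * h2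
lemma hom3 : om ^ 3 = 1 := by linear_combination (om - 1) * hom
lemma hom0 : om ≠ 0 := by
  intro h
  have h1 := hom
  rw [h] at h1
  simp at h1
lemma homne1 : om ≠ 1 := by
  intro h
  exact one_ne_zero (α := kbar) (by linear_combination hom - (om + 2) * h - h2)

noncomputable def uom : kbarˣ := ⟨om, om ^ 2, by linear_combination hom3, by linear_combination hom3⟩

lemma uom_coe : (uom : kbar) = om := rfl
lemma uom_inv_coe : ((uom⁻¹ : kbarˣ) : kbar) = om ^ 2 := rfl

noncomputable def tE (u : kbarˣ) : G := ⟨!![(u : kbar), 0; 0, ((u⁻¹ : kbarˣ) : kbar)], by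
  simp [Matrix.det_fin_two_of]⟩

noncomputable def s0 : G := tE uom

noncomputable def xE (b : kbar) : G := ⟨!![1, b; 0, 1], by simp [Matrix.det_fin_two_of]⟩
noncomputable def yE (c : kbar) : G := ⟨!![1, 0; c, 1], by simp [Matrix.det_fin_two_of]⟩

lemma xE_mul (a b : kbar) : xE a * xE b = xE (a + b) := by
  apply Subtype.ext
  show (xE a).1 * (xE b).1 = (xE (a+b)).1
  ext i j
  fin_cases i <;> fin_cases j <;> simp [xE, Matrix.mul_apply, Fin.sum_univ_two] <;> ring

lemma yE_mul (a b : kbar) : yE a * yE b = yE (a + b) := by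
  apply Subtype.ext
  show (yE a).1 * (yE b).1 = (yE (a+b)).1
  ext i j
  fin_cases i <;> fin_cases j <;> simp [yE, Matrix.mul_apply, Fin.sum_univ_two] <;> ring

lemma xE_zero : xE 0 = 1 := by
  apply Subtype.ext
  show (xE 0).1 = 1
  ext i j
  fin_cases i <;> fin_cases j <;> simp [xE]

lemma yE_zero : yE 0 = 1 := by
  apply Subtype.ext
  show (yE 0).1 = 1
  ext i j
  fin_cases i <;> fin_cases j <;> simp [yE]

lemma tE_mul (a b : kbarˣ) : tE a * tE b = tE (a * b) := by
  apply Subtype.ext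
  show (tE a).1 * (tE b).1 = (tE (a*b)).1
  ext i j
  fin_cases i <;> fin_cases j <;> simp [tE, Matrix.mul_apply, Fin.sum_univ_two] <;> ring

lemma tE_one : tE 1 = 1 := by
  apply Subtype.ext
  show (tE 1).1 = 1
  ext i j
  fin_cases i <;> fin_cases j <;> simp [tE]

lemma tE_inv (a : kbarˣ) : (tE a)⁻¹ = tE a⁻¹ :=
  inv_eq_of_mul_eq_one_right (by rw [tE_mul, mul_inv_cancel, tE_one])

lemma tE_injective : Function.Injective tE := by
  intro a b h
  have := congrFun (congrFun (congrArg Subtype.val h) 0) 0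
  simp [tE] at this
  exact Units.ext this

lemma xE_injective : Function.Injective xE := by
  intro a b h
  have := congrFun (congrFun (congrArg Subtype.val h) 0) 1
  simpa [xE] using this

lemma yE_injective : Function.Injective yE := by
  intro a b h
  have := congrFun (congrFun (congrArg Subtype.val h) 1) 0
  simpa [yE] using this

lemma sq_inj {a b : kbar} (h : a ^ 2 = b ^ 2) : a = b := by
  have h3 : (a + b) ^ 2 = 0 := by rw [CharTwo.add_sq, h, CharTwo.add_self_eq_zero]
  have h4 : a + b = 0 := pow_eq_zero_iff (n := 2) (by norm_num) |>.mp h3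
  linear_combination h4 - b * h2

lemma exists_sqrt (c : kbar) : ∃ z : kbar, z ^ 2 = c :=
  IsAlgClosed.exists_pow_nat_eq c (by norm_num)

/-- conjugation of upper unipotents by the torus -/
lemma tE_xE_conj (u : kbarˣ) (b : kbar) :
    tE u * xE b * (tE u)⁻¹ = xE ((u : kbar) ^ 2 * b) := by
  rw [tE_inv]
  apply Subtype.ext
  show (tE u).1 * (xE b).1 * (tE u⁻¹).1 = (xE ((u : kbar) ^ 2 * b)).1
  have hu : ((u⁻¹ : kbarˣ) : kbar) = (u : kbar)⁻¹ := by simp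
  ext i j
  fin_cases i <;> fin_cases j <;>
    simp [tE, xE, Matrix.mul_apply, Fin.sum_univ_two, hu] <;> ring

lemma tE_yE_conj (u : kbarˣ) (b : kbar) :
    tE u * yE b * (tE u)⁻¹ = yE (((u : kbar)⁻¹) ^ 2 * b) := by
  rw [tE_inv]
  apply Subtype.ext
  show (tE u).1 * (yE b).1 * (tE u⁻¹).1 = (yE (((u : kbar)⁻¹) ^ 2 * b)).1
  have hu : ((u⁻¹ : kbarˣ) : kbar) = (u : kbar)⁻¹ := by simp
  ext i j
  fin_cases i <;> fin_cases j <;>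
    simp [tE, yE, Matrix.mul_apply, Fin.sum_univ_two, hu] <;> ring

lemma hominv : (om : kbar)⁻¹ = om ^ 2 :=
  inv_eq_of_mul_eq_one_right (by linear_combination hom3)

/-- centralizer of s0 is the diagonal torus -/
lemma cent_s0 (m : G) (hm : m * s0 = s0 * m) : ∃ b : kbarˣ, m = tE b := by
  have hc := congrArg Subtype.val hm
  have h01 : m.1 0 1 = 0 := by
    have e := congrFun (congrFun hc 0) 1
    rw [Matrix.SpecialLinearGroup.coe_mul, Matrix.SpecialLinearGroup.coe_mul] at e
    show m.1 0 1 = 0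
    simp [s0, tE, uom_coe, uom_inv_coe, Matrix.mul_apply, Fin.sum_univ_two] at e
    rw [hominv] at e
    linear_combination e - (m.1 0 1) * hom + (m.1 0 1) * (om + 1) * h2
  have h10 : m.1 1 0 = 0 := by
    have e := congrFun (congrFun hc 1) 0
    rw [Matrix.SpecialLinearGroup.coe_mul, Matrix.SpecialLinearGroup.coe_mul] at e
    show m.1 1 0 = 0
    simp [s0, tE, uom_coe, uom_inv_coe, Matrix.mul_apply, Fin.sum_univ_two] at e
    rw [hominv] at e
    linear_combination - e - (m.1 1 0) * hom + (m.1 1 0) * (om + 1) * h2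
  have hdet : m.1 0 0 * m.1 1 1 = 1 := by
    have := m.2
    rw [Matrix.det_fin_two] at this
    rw [h01] at this
    linear_combination this
  refine ⟨⟨m.1 0 0, m.1 1 1, hdet, by linear_combination hdet⟩, ?_⟩
  apply Subtype.ext
  show m.1 = (tE _).1
  ext i j
  fin_cases i <;> fin_cases j <;> simp [tE, h01, h10] <;> rfl

open IntermediateField in
lemma units_torsion (y : kbarˣ) : ∃ n : ℕ, 0 < n ∧ y ^ n = 1 := by
  have hx : IsIntegral (ZMod 2) (y : kbar) :=
    IsAlgebraic.isIntegral (Algebra.IsAlgebraic.isAlgebraic _)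
  haveI : FiniteDimensional (ZMod 2) (ZMod 2)⟮(y : kbar)⟯ :=
    IntermediateField.adjoin.finiteDimensional hx
  haveI : Finite ((ZMod 2)⟮(y : kbar)⟯) := Module.finite_of_finite (ZMod 2)
  have hmem : (y : kbar) ∈ (ZMod 2)⟮(y : kbar)⟯ :=
    IntermediateField.mem_adjoin_simple_self _ _
  obtain ⟨i, j, hij, heq⟩ := Finite.exists_ne_map_eq_of_infinite
    (fun n : ℕ => (⟨(y : kbar), hmem⟩ : (ZMod 2)⟮(y : kbar)⟯) ^ n)
  have hpow : (y : kbar) ^ i = (y : kbar) ^ j := by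
    have := congrArg Subtype.val heq
    simpa using this
  have hy : y ^ i = y ^ j := by
    apply Units.ext
    simpa using hpow
  rcases lt_or_gt_of_ne hij with h | h
  · refine ⟨j - i, Nat.sub_pos_of_lt h, ?_⟩
    have : y ^ (j - i) * y ^ i = 1 * y ^ i := by
      rw [one_mul, ← pow_add, Nat.sub_add_cancel h.le, hy]
    exact mul_right_cancel this
  · refine ⟨i - j, Nat.sub_pos_of_lt h, ?_⟩
    have : y ^ (i - j) * y ^ j = 1 * y ^ j := by
      rw [one_mul, ← pow_add, Nat.sub_add_cancel h.le, ← hy]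
    exact mul_right_cancel this

lemma conj3 (g : G) (h3 : g ^ 3 = 1) (h1 : g ≠ 1) : ∃ h : G, g * h = h * s0 := by
  set a := g.1 0 0 with ha
  set b := g.1 0 1 with hb
  set c := g.1 1 0 with hc
  set d := g.1 1 1 with hdd
  have hdet : a * d - b * c = 1 := by
    have := g.2
    rwa [Matrix.det_fin_two] at this
  have hM : g.1 = !![a, b; c, d] := Matrix.eta_fin_two g.1
  have hcube : g.1 * g.1 * g.1 = 1 := by
    have h := congrArg Subtype.val h3
    rw [Matrix.SpecialLinearGroup.coe_pow, Matrix.SpecialLinearGroup.coe_one] at h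
    rw [pow_succ, pow_succ, pow_one] at h
    exact h
  have hone : ∀ i j : Fin 2, (1 : Matrix (Fin 2) (Fin 2) kbar) i j = !![(1:kbar),0;0,1] i j := by
    intro i j; fin_cases i <;> fin_cases j <;> simp
  rw [hM] at hcube
  have E00 := congrFun (congrFun hcube 0) 0
  have E01 := congrFun (congrFun hcube 0) 1
  have E10 := congrFun (congrFun hcube 1) 0
  have E11 := congrFun (congrFun hcube 1) 1
  simp [Matrix.mul_apply, Fin.sum_univ_two, Matrix.one_apply] at E00 E01 E10 E11
  -- g ≠ 1 in entry form
  have hne : ¬ (a = 1 ∧ b = 0 ∧ c = 0 ∧ d = 1) := by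
    rintro ⟨u1, u2, u3, u4⟩
    apply h1
    apply Subtype.ext
    rw [hM, u1, u2, u3, u4, Matrix.SpecialLinearGroup.coe_one]
    ext i j
    fin_cases i <;> fin_cases j <;> simp
  -- trace is 1
  have htr : a + d = 1 := by
    by_contra hT
    have hT' : a + d + 1 ≠ 0 := by
      intro h
      exact hT (by linear_combination h - h2)
    have hb0 : b = 0 := by
      have key : b * ((a + d + 1) * (a + d + 1)) = 0 := by
        linear_combination E01 + b * hdet + b * (a + d + 1) * h2
      rcases mul_eq_zero.mp key with h | h
      · exact h
      · exact absurd h (mul_ne_zero hT' hT')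
    have hc0 : c = 0 := by
      have key : c * ((a + d + 1) * (a + d + 1)) = 0 := by
        linear_combination E10 + c * hdet + c * (a + d + 1) * h2
      rcases mul_eq_zero.mp key with h | h
      · exact h
      · exact absurd h (mul_ne_zero hT' hT')
    rw [hb0, hc0] at E00 hdet
    -- E00 : a^3 = 1 (in some raw form), hdet : a * d = 1
    have ha3 : a ^ 3 = 1 := by linear_combination E00
    have had : a * d = 1 := by linear_combination hdet
    have ha1 : a ≠ 1 := by
      intro h
      rw [h, one_mul] at had
      exact hne ⟨h, hb0, hc0, had⟩
    have hquad : a ^ 2 + a + 1 = 0 := by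
      have hfac : (a - 1) * (a ^ 2 + a + 1) = 0 := by linear_combination ha3
      rcases mul_eq_zero.mp hfac with h | h
      · exact absurd (by linear_combination h) ha1
      · exact h
    have hd2 : d = a ^ 2 := by
      have ha0 : a ≠ 0 := by
        intro h
        rw [h, zero_mul] at had
        exact zero_ne_one had
      have : a * (d - a ^ 2) = 0 := by linear_combination had - ha3
      rcases mul_eq_zero.mp this with h | h
      · exact absurd h ha0
      · linear_combination h
    exact hT (by linear_combination hquad + hd2 - h2)
  have hd : d = a + 1 := by linear_combination htr - a * h2
  clear E00 E01 E10 E11 hcube hone hne h3 h1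
  have hs0 : s0.1 = !![om, 0; 0, om ^ 2] := rfl
  by_cases hbz : b = 0
  · -- b = 0 : g is lower triangular with diagonal (om, om^2) in some order
    have had2 : a * (a + 1) = 1 := by
      rw [hd, hbz] at hdet
      linear_combination hdet
    have hquad : a ^ 2 + a + 1 = 0 := by linear_combination had2 + h2
    have hfac : (a - om) * (a - om ^ 2) = 0 := by
      linear_combination hquad + (om - 1 - a) * hom
    rcases mul_eq_zero.mp hfac with hcase | hcase
    · -- a = om
      have haom : a = om := by linear_combination hcase
      refine ⟨yE c, ?_⟩
      apply Subtype.ext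
      rw [Matrix.SpecialLinearGroup.coe_mul, Matrix.SpecialLinearGroup.coe_mul, hM, hs0]
      show _ * (yE c).1 = (yE c).1 * _
      ext i j
      fin_cases i <;> fin_cases j <;>
        simp [yE, Matrix.mul_apply, Fin.sum_univ_two]
      · linear_combination haom + c * hbz
      · exact hbz
      · linear_combination c * hd + c * haom + c * h2
      · linear_combination hd + haom - hom2
    · -- a = om^2
      have haom2 : a = om ^ 2 := by linear_combination hcase
      refine ⟨⟨!![0, 1; 1, c], by rw [Matrix.det_fin_two_of]; linear_combination -h2⟩, ?_⟩
      apply Subtype.ext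
      show g.1 * !![(0:kbar), 1; 1, c] = !![(0:kbar), 1; 1, c] * s0.1
      rw [hM, hs0]
      show _ * !![(0:kbar), 1; 1, c] = !![(0:kbar), 1; 1, c] * _
      ext i j
      fin_cases i <;> fin_cases j <;>
        simp [Matrix.mul_apply, Fin.sum_univ_two]
      · exact hbz
      · linear_combination haom2 + c * hbz
      · linear_combination hd + haom2 + hom2 + h2
      · linear_combination c * hd + c * haom2 + c * h2
  · -- b ≠ 0
    obtain ⟨β, hβ⟩ := exists_sqrt b
    have hβ0 : β ≠ 0 := by
      intro h
      rw [h] at hβ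
      exact hbz (by linear_combination -hβ)
    refine ⟨⟨β⁻¹ • !![b, b; a + om, a + om ^ 2], ?_⟩, ?_⟩
    · rw [Matrix.det_smul, Matrix.det_fin_two_of]
      have hcard : Fintype.card (Fin 2) = 2 := by simp
      rw [hcard]
      rw [← hβ]
      field_simp
      ring_nf
      linear_combination hom2
    · apply Subtype.ext
      show g.1 * (β⁻¹ • !![b, b; a + om, a + om ^ 2]) = (β⁻¹ • !![b, b; a + om, a + om ^ 2]) * s0.1
      rw [Matrix.mul_smul, Matrix.smul_mul]
      congr 1
      rw [hM, hs0]
      have hdet2 : a * (a + 1) - b * c = 1 := by rw [hd] at hdet; exact hdet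
      ext i j
      fin_cases i <;> fin_cases j <;>
        simp [Matrix.mul_apply, Fin.sum_univ_two]
      · linear_combination a * b * h2
      · linear_combination a * b * h2
      · linear_combination hdet2 - hom + (b * c + om + 1) * h2 + (a + om) * hd
      · linear_combination hdet2 + hom - om * hom3 + (b * c - om) * h2 + (a + om ^ 2) * hd

lemma s0_inv_coe : (s0⁻¹).1 = !![om ^ 2, 0; 0, om] := by
  rw [show s0⁻¹ = tE uom⁻¹ from tE_inv uom]
  rfl

lemma invol_cases (v : G) (hv2 : v * v = 1) (hv1 : v ≠ 1)
    (hcomm : (s0 * v * s0⁻¹) * v = v * (s0 * v * s0⁻¹)) :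
    (∃ q, q ≠ 0 ∧ v = xE q) ∨ (∃ r, r ≠ 0 ∧ v = yE r) := by
  set p := v.1 0 0 with hp
  set q := v.1 0 1 with hq
  set r := v.1 1 0 with hr
  set s := v.1 1 1 with hs
  have hM : v.1 = !![p, q; r, s] := Matrix.eta_fin_two v.1
  have hdet : p * s - q * r = 1 := by
    have := v.2
    rwa [Matrix.det_fin_two] at this
  have hs0 : s0.1 = !![om, 0; 0, om ^ 2] := rfl
  have E := congrFun (congrFun (congrArg Subtype.val hcomm) 0) 0
  simp only [Matrix.SpecialLinearGroup.coe_mul] at E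
  rw [s0_inv_coe, hM, hs0] at E
  simp [Matrix.mul_apply, Fin.sum_univ_two] at E
  have hqr : q * r = 0 := by
    linear_combination E + (om ^ 2 - om - 1) * q * r * hom + (om + 1) * q * r * h2
  have hsq : v.1 * v.1 = 1 := by
    have h := congrArg Subtype.val hv2
    rwa [Matrix.SpecialLinearGroup.coe_mul, Matrix.SpecialLinearGroup.coe_one] at h
  rw [hM] at hsq
  have S00 := congrFun (congrFun hsq 0) 0
  have S11 := congrFun (congrFun hsq 1) 1
  simp [Matrix.mul_apply, Fin.sum_univ_two, Matrix.one_apply] at S00 S11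
  rcases mul_eq_zero.mp hqr with hcase | hcase
  · -- q = 0 : v is lower triangular
    right
    have hp1 : p = 1 := by
      apply sq_inj
      rw [one_pow]
      linear_combination S00 - r * hcase
    have hs1 : s = 1 := by
      apply sq_inj
      rw [one_pow]
      linear_combination S11 - r * hcase
    have hv : v = yE r := by
      apply Subtype.ext
      rw [hM]
      show _ = (yE r).1
      rw [hcase, hp1, hs1]
      rfl
    refine ⟨r, ?_, hv⟩
    intro h
    rw [h, yE_zero] at hv
    exact hv1 hv
  · -- r = 0 : v is upper triangular
    left
    have hp1 : p = 1 := by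
      apply sq_inj
      rw [one_pow]
      linear_combination S00 - q * hcase
    have hs1 : s = 1 := by
      apply sq_inj
      rw [one_pow]
      linear_combination S11 - q * hcase
    have hv : v = xE q := by
      apply Subtype.ext
      rw [hM]
      show _ = (xE q).1
      rw [hcase, hp1, hs1]
      rfl
    refine ⟨q, ?_, hv⟩
    intro h
    rw [h, xE_zero] at hv
    exact hv1 hv

lemma surjective_of_all (ψ : G →* G)
    (hx : ∀ c, xE c ∈ ψ.range) (hy : ∀ c, yE c ∈ ψ.range)
    (ht : ∀ u : kbarˣ, tE u ∈ ψ.range) : Function.Surjective ψ := by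
  have hall : ∀ g : G, g ∈ ψ.range := by
    intro g
    obtain ⟨L, L', D, hLDL⟩ :=
      Matrix.Pivot.exists_list_transvec_mul_diagonal_mul_list_transvec g.1
    have hprod : ∀ (L : List (Matrix.TransvectionStruct (Fin 2) kbar)),
        ∃ u : G, u ∈ ψ.range ∧ u.1 = (L.map Matrix.TransvectionStruct.toMatrix).prod := by
      intro L
      induction L with
      | nil => exact ⟨1, one_mem _, by simp⟩
      | cons t L ih =>
        obtain ⟨u, hu, hu2⟩ := ih
        have hw : ∃ w : G, w ∈ ψ.range ∧ w.1 = t.toMatrix := by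
          rcases t with ⟨i, j, hij, c⟩
          fin_cases i <;> fin_cases j
          · exact absurd rfl hij
          · refine ⟨xE c, hx c, ?_⟩
            show (xE c).1 = Matrix.transvection 0 1 c
            ext i j
            fin_cases i <;> fin_cases j <;>
              simp [xE, Matrix.transvection, Matrix.single]
          · refine ⟨yE c, hy c, ?_⟩
            show (yE c).1 = Matrix.transvection 1 0 c
            ext i j
            fin_cases i <;> fin_cases j <;>
              simp [yE, Matrix.transvection, Matrix.single]
          · exact absurd rfl hij
        obtain ⟨w, hwr, hw2⟩ := hw
        refine ⟨w * u, mul_mem hwr hu, ?_⟩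
        rw [Matrix.SpecialLinearGroup.coe_mul, hw2, hu2]
        simp
    obtain ⟨uL, huL, huL2⟩ := hprod L
    obtain ⟨uR, huR, huR2⟩ := hprod L'
    have hdetg : Matrix.det g.1 = 1 := g.2
    have hdetD : D 0 * D 1 = 1 := by
      have h1 := congrArg Matrix.det hLDL
      rw [Matrix.det_mul, Matrix.det_mul, hdetg,
        Matrix.TransvectionStruct.det_toMatrix_prod,
        Matrix.TransvectionStruct.det_toMatrix_prod,
        Matrix.det_diagonal, Fin.prod_univ_two] at h1
      linear_combination -h1
    have hD1 : D 1 * D 0 = 1 := by linear_combination hdetD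
    set uD : kbarˣ := ⟨D 0, D 1, hdetD, hD1⟩ with huD
    have hDmat : Matrix.diagonal D = (tE uD).1 := by
      ext i j
      fin_cases i <;> fin_cases j <;> simp [tE, Matrix.diagonal, huD] <;> rfl
    have hg : g = uL * tE uD * uR := by
      apply Subtype.ext
      rw [Matrix.SpecialLinearGroup.coe_mul, Matrix.SpecialLinearGroup.coe_mul,
        huL2, huR2, ← hDmat]
      exact hLDL
    rw [hg]
    exact mul_mem (mul_mem huL (ht uD)) huR
  intro g
  obtain ⟨x, hx'⟩ := hall g
  exact ⟨x, hx'⟩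

lemma s0_cube : s0 ^ 3 = 1 := by
  show tE uom ^ 3 = 1
  rw [pow_succ, pow_succ, pow_one, tE_mul, tE_mul]
  have huom : uom * uom * uom = 1 := by
    apply Units.ext
    show om * om * om = 1
    linear_combination hom3
  rw [huom, tE_one]

lemma s0_ne_one : s0 ≠ 1 := by
  intro h
  have := congrFun (congrFun (congrArg Subtype.val h) 0) 0
  simp [s0, tE, uom_coe] at this
  exact homne1 this

end SL2Aux

open SL2Aux

/-- `SL₂` of the algebraic closure of `𝔽₂` is co-Hopfian: every injective group
endomorphism is surjective (hence an automorphism). -/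
theorem SL2_algClosure_F2_coHopfian (φ : G →* G) (hφ : Function.Injective φ) :
    Function.Surjective φ := by
  classical
  -- conjugate φ so that it fixes s0
  obtain ⟨h, hh⟩ := conj3 (φ s0) (by rw [← map_pow, s0_cube, map_one])
    (fun e => s0_ne_one (hφ (by rw [e, map_one])))
  set ψ : G →* G := (MulAut.conj h⁻¹).toMonoidHom.comp φ with hψdef
  have hψ_apply : ∀ x, ψ x = h⁻¹ * φ x * h := by
    intro x
    simp [hψdef, MulAut.conj_apply]
  have hψs0 : ψ s0 = s0 := by
    have hφs0 : φ s0 = h * s0 * h⁻¹ := by rw [← hh]; group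
    rw [hψ_apply, hφs0]
    group
  have hψinj : Function.Injective ψ := by
    intro x y hxy
    apply hφ
    rw [hψ_apply, hψ_apply] at hxy
    exact mul_left_cancel (mul_right_cancel hxy)
  suffices hs : Function.Surjective ψ by
    intro y
    obtain ⟨x, hx⟩ := hs (h⁻¹ * y * h)
    refine ⟨x, ?_⟩
    rw [hψ_apply] at hx
    have := congrArg (fun z => h * z * h⁻¹) hx
    simpa [mul_assoc] using this
  -- ψ preserves the diagonal torus
  have Hdg : ∀ a : kbarˣ, ∃ b : kbarˣ, ψ (tE a) = tE b := by
    intro a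
    apply cent_s0
    rw [← hψs0, ← map_mul, ← map_mul]
    show ψ (tE a * tE uom) = ψ (tE uom * tE a)
    rw [tE_mul, tE_mul, mul_comm]
  choose f hf using Hdg
  have hfmul : ∀ a b, f (a * b) = f a * f b := by
    intro a b
    apply tE_injective
    have e1 : tE (f (a * b)) = ψ (tE (a * b)) := (hf _).symm
    have e2 : ψ (tE (a * b)) = tE (f a) * tE (f b) := by
      rw [← tE_mul, map_mul, hf, hf]
    rw [e1, e2, tE_mul]
  have hf1 : f 1 = 1 := by
    have h1 := hfmul 1 1
    rw [one_mul] at h1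
    exact (left_eq_mul.mp h1)
  have hfpow : ∀ (a : kbarˣ) (n : ℕ), f (a ^ n) = f a ^ n := by
    intro a n
    induction n with
    | zero => simpa using hf1
    | succ n ih => rw [pow_succ, hfmul, ih, pow_succ]
  have hfinj : Function.Injective f := by
    intro a b hab
    apply tE_injective
    apply hψinj
    rw [hf, hf, hab]
  have HtE : ∀ u : kbarˣ, ∃ a : kbarˣ, ψ (tE a) = tE u := by
    intro u
    obtain ⟨n, hn, hun⟩ := units_torsion u
    have hfin : Set.Finite {z : kbarˣ | z ^ n = 1} := by
      have hpoly : (Polynomial.X ^ n - Polynomial.C 1 : Polynomial kbar) ≠ 0 :=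
        Polynomial.X_pow_sub_C_ne_zero hn 1
      have hsub : {z : kbarˣ | z ^ n = 1} ⊆
          (Units.val) ⁻¹' {x : kbar | (Polynomial.X ^ n - Polynomial.C 1 : Polynomial kbar).IsRoot x} := by
        intro z hz
        have hz' : (z : kbar) ^ n = 1 := by
          have := congrArg Units.val hz
          simpa using this
        simp [Polynomial.IsRoot, hz']
      exact Set.Finite.subset
        (Set.Finite.preimage (Set.injOn_of_injective Units.val_injective)
          (Polynomial.finite_setOf_isRoot hpoly)) hsub
    have hmaps : Set.MapsTo f {z : kbarˣ | z ^ n = 1} {z : kbarˣ | z ^ n = 1} := by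
      intro z hz
      simp only [Set.mem_setOf_eq] at hz ⊢
      rw [← hfpow, hz, hf1]
    have hbij := (Set.Finite.injOn_iff_bijOn_of_mapsTo hfin hmaps).mp hfinj.injOn
    obtain ⟨a, _, ha2⟩ := hbij.surjOn hun
    exact ⟨a, by rw [hf, ha2]⟩
  -- images of the two unipotent generators
  have hone : (1 : kbar) + 1 = 0 := by linear_combination h2
  have hx2 : xE 1 * xE 1 = 1 := by rw [xE_mul, hone, xE_zero]
  have hy2 : yE 1 * yE 1 = 1 := by rw [yE_mul, hone, yE_zero]
  have hxne : xE (1 : kbar) ≠ 1 := by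
    intro hcon
    rw [← xE_zero] at hcon
    exact one_ne_zero (xE_injective hcon)
  have hyne : yE (1 : kbar) ≠ 1 := by
    intro hcon
    rw [← yE_zero] at hcon
    exact one_ne_zero (yE_injective hcon)
  obtain ⟨aom, haom⟩ := HtE uom
  have haom' : ψ (tE aom) = s0 := haom
  have hcx : (s0 * ψ (xE 1) * s0⁻¹) * ψ (xE 1) = ψ (xE 1) * (s0 * ψ (xE 1) * s0⁻¹) := by
    have base : (tE aom * xE 1 * (tE aom)⁻¹) * xE 1 = xE 1 * (tE aom * xE 1 * (tE aom)⁻¹) := by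
      rw [tE_xE_conj, xE_mul, xE_mul, add_comm]
    have hb := congrArg ψ base
    simpa [map_mul, map_inv, haom'] using hb
  have hcy : (s0 * ψ (yE 1) * s0⁻¹) * ψ (yE 1) = ψ (yE 1) * (s0 * ψ (yE 1) * s0⁻¹) := by
    have base : (tE aom * yE 1 * (tE aom)⁻¹) * yE 1 = yE 1 * (tE aom * yE 1 * (tE aom)⁻¹) := by
      rw [tE_yE_conj, yE_mul, yE_mul, add_comm]
    have hb := congrArg ψ base
    simpa [map_mul, map_inv, haom'] using hb
  have hvx := invol_cases (ψ (xE 1)) (by rw [← map_mul, hx2, map_one])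
    (fun e => hxne (hψinj (by rw [e, map_one]))) hcx
  have hvy := invol_cases (ψ (yE 1)) (by rw [← map_mul, hy2, map_one])
    (fun e => hyne (hψinj (by rw [e, map_one]))) hcy
  -- helpers producing all unipotents in the range
  have coreX : ∀ (w : G) (q : kbar), q ≠ 0 → ψ w = xE q → ∀ c, xE c ∈ ψ.range := by
    intro w q hq hw c
    by_cases hc : c = 0
    · exact ⟨1, by rw [map_one, hc, xE_zero]⟩
    · obtain ⟨z, hz⟩ := exists_sqrt (c * q⁻¹)
      have hz0 : z ≠ 0 := by
        intro hcon
        rw [hcon] at hz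
        have : c * q⁻¹ = 0 := by linear_combination -hz
        rcases mul_eq_zero.mp this with h' | h'
        · exact hc h'
        · exact hq (by rwa [inv_eq_zero] at h')
      obtain ⟨a, ha⟩ := HtE (Units.mk0 z hz0)
      refine ⟨tE a * w * (tE a)⁻¹, ?_⟩
      rw [map_mul, map_mul, map_inv, ha, hw, tE_xE_conj]
      congr 1
      show z ^ 2 * q = c
      rw [hz]
      field_simp [hq]
  have coreY : ∀ (w : G) (r : kbar), r ≠ 0 → ψ w = yE r → ∀ c, yE c ∈ ψ.range := by
    intro w r hr hw c
    by_cases hc : c = 0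
    · exact ⟨1, by rw [map_one, hc, yE_zero]⟩
    · obtain ⟨z, hz⟩ := exists_sqrt (r * c⁻¹)
      have hz0 : z ≠ 0 := by
        intro hcon
        rw [hcon] at hz
        have : r * c⁻¹ = 0 := by linear_combination -hz
        rcases mul_eq_zero.mp this with h' | h'
        · exact hr h'
        · exact hc (by rwa [inv_eq_zero] at h')
      obtain ⟨a, ha⟩ := HtE (Units.mk0 z hz0)
      refine ⟨tE a * w * (tE a)⁻¹, ?_⟩
      rw [map_mul, map_mul, map_inv, ha, hw, tE_yE_conj]
      congr 1
      show ((z : kbar)⁻¹) ^ 2 * r = c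
      field_simp [hz0] at hz ⊢
      linear_combination -hz
  have hxy_ne : xE 1 * yE 1 ≠ yE 1 * xE 1 := by
    intro hcon
    have := congrFun (congrFun (congrArg Subtype.val hcon) 0) 0
    rw [Matrix.SpecialLinearGroup.coe_mul, Matrix.SpecialLinearGroup.coe_mul] at this
    simp [xE, yE, Matrix.mul_apply, Fin.sum_univ_two, hone] at this
  have HtErange : ∀ u : kbarˣ, tE u ∈ ψ.range := by
    intro u
    obtain ⟨a, ha⟩ := HtE u
    exact ⟨tE a, ha⟩
  rcases hvx with ⟨q, hq, hwx⟩ | ⟨r, hr, hwx⟩ <;>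
    rcases hvy with ⟨q', hq', hwy⟩ | ⟨r', hr', hwy⟩
  · exact absurd (hψinj (show ψ (xE 1 * yE 1) = ψ (yE 1 * xE 1) by
      rw [map_mul, map_mul, hwx, hwy, xE_mul, xE_mul, add_comm])) hxy_ne
  · exact surjective_of_all ψ (coreX (xE 1) q hq hwx) (coreY (yE 1) r' hr' hwy) HtErange
  · exact surjective_of_all ψ (coreX (yE 1) q' hq' hwy) (coreY (xE 1) r hr hwx) HtErange
  · exact absurd (hψinj (show ψ (xE 1 * yE 1) = ψ (yE 1 * xE 1) by
      rw [map_mul, map_mul, hwx, hwy, yE_mul, yE_mul, add_comm])) hxy_ne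
end

section
/- Let k be the algebraic closure of the field with 2 elements and let G = SL₂(k). Then G is commutative transitive: for all x, y, z in G with y ≠ 1, if x commutes with y and y commutes with z, then x commutes with z. -/
open Matrix

/-- Any matrix commuting with a non-scalar 2×2 matrix over a field is a
linear combination of the identity and that matrix. -/
lemma exists_comb {K : Type*} [Field K] (y x : Matrix (Fin 2) (Fin 2) K)
    (hns : ¬ (y 0 1 = 0 ∧ y 1 0 = 0 ∧ y 0 0 = y 1 1))
    (hxy : x * y = y * x) : ∃ α β : K, x = α • 1 + β • y := by
  have h00 := congrFun (congrFun hxy 0) 0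
  have h01 := congrFun (congrFun hxy 0) 1
  have h10 := congrFun (congrFun hxy 1) 0
  simp [Matrix.mul_apply, Fin.sum_univ_two] at h00 h01 h10
  by_cases hb : y 0 1 = 0
  · by_cases hc : y 1 0 = 0
    · have had : y 0 0 ≠ y 1 1 := fun h => hns ⟨hb, hc, h⟩
      have hd : y 1 1 - y 0 0 ≠ 0 := sub_ne_zero.mpr (Ne.symm had)
      simp only [hb, hc, mul_zero, zero_mul, add_zero, zero_add] at h01 h10
      have hx01 : x 0 1 = 0 := by
        have h : x 0 1 * (y 1 1 - y 0 0) = 0 := by linear_combination h01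
        exact (mul_eq_zero.mp h).resolve_right hd
      have hx10 : x 1 0 = 0 := by
        have h : x 1 0 * (y 1 1 - y 0 0) = 0 := by linear_combination -h10
        exact (mul_eq_zero.mp h).resolve_right hd
      refine ⟨(x 0 0 * y 1 1 - x 1 1 * y 0 0) / (y 1 1 - y 0 0),
              (x 1 1 - x 0 0) / (y 1 1 - y 0 0), ?_⟩
      ext i j
      fin_cases i <;> fin_cases j <;>
        simp [Matrix.add_apply, Matrix.smul_apply, Matrix.one_apply, hb, hc, hx01, hx10] <;>
        field_simp <;> ring
    · refine ⟨x 0 0 - (x 1 0 / y 1 0) * y 0 0, x 1 0 / y 1 0, ?_⟩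
      ext i j
      fin_cases i <;> fin_cases j <;>
        simp [Matrix.add_apply, Matrix.smul_apply, Matrix.one_apply] <;>
        field_simp
      · linear_combination h00
      · linear_combination h10
  · refine ⟨x 0 0 - (x 0 1 / y 0 1) * y 0 0, x 0 1 / y 0 1, ?_⟩
    ext i j
    fin_cases i <;> fin_cases j <;>
      simp [Matrix.add_apply, Matrix.smul_apply, Matrix.one_apply] <;>
      field_simp
    · linear_combination -h00
    · linear_combination -h01

/-- `SL₂` of the algebraic closure of `𝔽₂` is commutative transitive. -/
theorem SL2_algClosure_F2_commutative_transitive (x y z : G) (hy : y ≠ 1)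
    (hxy : x * y = y * x) (hyz : y * z = z * y) : x * z = z * x := by
  have hns : ¬ ((y : Matrix (Fin 2) (Fin 2) kbar) 0 1 = 0 ∧ (y : Matrix (Fin 2) (Fin 2) kbar) 1 0 = 0 ∧ (y : Matrix (Fin 2) (Fin 2) kbar) 0 0 = (y : Matrix (Fin 2) (Fin 2) kbar) 1 1) := by
    rintro ⟨hb, hc, had⟩
    have hdet : (y : Matrix (Fin 2) (Fin 2) kbar).det = 1 := y.2
    rw [Matrix.det_fin_two, hb, hc, ← had] at hdet
    have h2 : (2 : kbar) = 0 := by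
      have := CharP.cast_eq_zero kbar 2
      exact this
    have hsq : ((y : Matrix (Fin 2) (Fin 2) kbar) 0 0 - 1) ^ 2 = 0 := by
      linear_combination hdet - ((y : Matrix (Fin 2) (Fin 2) kbar) 0 0) * h2 + h2
    have h1 : (y : Matrix (Fin 2) (Fin 2) kbar) 0 0 = 1 := by
      have := pow_eq_zero_iff (n := 2) (by norm_num) |>.mp hsq
      exact sub_eq_zero.mp this
    apply hy
    ext i j
    fin_cases i <;> fin_cases j <;>
      simp [hb, hc, h1, ← had, Matrix.SpecialLinearGroup.coe_one, Matrix.one_apply]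
  have hxy' : (x : Matrix (Fin 2) (Fin 2) kbar) * y = (y : Matrix (Fin 2) (Fin 2) kbar) * x := by
    exact_mod_cast congrArg Subtype.val hxy
  have hzy' : (z : Matrix (Fin 2) (Fin 2) kbar) * y = (y : Matrix (Fin 2) (Fin 2) kbar) * z := by
    exact_mod_cast congrArg Subtype.val hyz.symm
  obtain ⟨α, β, hx⟩ := exists_comb _ _ hns hxy'
  obtain ⟨γ, δ, hz⟩ := exists_comb _ _ hns hzy'
  apply Subtype.ext
  show (x : Matrix (Fin 2) (Fin 2) kbar) * z = (z : Matrix (Fin 2) (Fin 2) kbar) * x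
  rw [hx, hz]
  simp only [add_mul, mul_add, smul_mul_assoc, mul_smul_comm, smul_smul, one_mul, mul_one]
  module
end

section
/- Let k be the algebraic closure of the field with 2 elements and let G = SL₂(k). If g ∈ G has order 2, then the centralizer of g in G is isomorphic as a group to the additive group (k, +) of k. -/
open Matrix

private lemma k2 : (1 : kbar) + 1 = 0 := by
  have h := CharP.cast_eq_zero kbar 2
  push_cast at h
  linear_combination h

/-- The standard unipotent element. -/
noncomputable def uu : G := ⟨!![1,1;0,1], by simp [Matrix.det_fin_two_of]⟩

private lemma kbar_sq_eq_one {p : kbar} (h : p * p = 1) : p = 1 := by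
  have h1 : (p - 1)^2 = 0 := by linear_combination h + (1 - p) * k2
  have h2 := pow_eq_zero_iff (n := 2) (by norm_num) |>.mp h1
  linear_combination h2

private lemma cent_u_entries (h : G) (hh : h ∈ Subgroup.centralizer ({uu} : Set G)) :
    (h : Matrix (Fin 2) (Fin 2) kbar) = !![1, (h : Matrix (Fin 2) (Fin 2) kbar) 0 1; 0, 1] := by
  rw [Subgroup.mem_centralizer_singleton_iff] at hh
  have hM : (h : Matrix (Fin 2) (Fin 2) kbar) * (uu : Matrix (Fin 2) (Fin 2) kbar)
      = (uu : Matrix (Fin 2) (Fin 2) kbar) * (h : Matrix (Fin 2) (Fin 2) kbar) := by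
    have := congrArg (Subtype.val) hh
    simpa using this
  set M := (h : Matrix (Fin 2) (Fin 2) kbar) with hMdef
  have hdet : M 0 0 * M 1 1 - M 0 1 * M 1 0 = 1 := by
    have := h.2
    rw [Matrix.det_fin_two] at this
    exact this
  rw [Matrix.eta_fin_two M] at hM
  rw [show (uu : Matrix (Fin 2) (Fin 2) kbar) = !![1,1;0,1] from rfl] at hM
  rw [Matrix.mul_fin_two, Matrix.mul_fin_two] at hM
  have e := fun i j => (Matrix.ext_iff.mpr hM) i j
  have e00 := e 0 0; have e01 := e 0 1
  simp at e00 e01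
  have hr : M 1 0 = 0 := e00
  have hs : M 1 1 = M 0 0 := by linear_combination -e01
  have hp : M 0 0 = 1 := by
    apply kbar_sq_eq_one
    linear_combination hdet + M 0 1 * hr - M 0 0 * hs
  conv_lhs => rw [Matrix.eta_fin_two M]
  rw [hr, hs, hp]

private lemma mem_cent_u (h : G) (y : kbar)
    (hcoe : (h : Matrix (Fin 2) (Fin 2) kbar) = !![1, y; 0, 1]) :
    h ∈ Subgroup.centralizer ({uu} : Set G) := by
  rw [Subgroup.mem_centralizer_singleton_iff]
  apply Subtype.ext
  rw [Matrix.SpecialLinearGroup.coe_mul, Matrix.SpecialLinearGroup.coe_mul, hcoe]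
  show !![(1:kbar), y; 0, 1] * !![1,1;0,1] = !![(1:kbar),1;0,1] * !![1, y; 0, 1]
  rw [Matrix.mul_fin_two, Matrix.mul_fin_two]
  refine Matrix.ext fun i j => ?_
  fin_cases i <;> fin_cases j <;> simp only [Matrix.cons_val', Matrix.cons_val_zero, Matrix.cons_val_one, Matrix.head_cons, Matrix.head_fin_const, Matrix.empty_val', Matrix.cons_val_fin_one, Matrix.of_apply, Fin.mk_zero, Fin.mk_one] <;> ring

/-- The centralizer of the standard unipotent is the additive group of kbar. -/
noncomputable def eqUnip : ↥(Subgroup.centralizer ({uu} : Set G)) ≃* Multiplicative kbar where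
  toFun h := Multiplicative.ofAdd (((h : G) : Matrix (Fin 2) (Fin 2) kbar) 0 1)
  invFun y := ⟨⟨!![1, y.toAdd; 0, 1], by simp [Matrix.det_fin_two_of]⟩,
    mem_cent_u _ y.toAdd rfl⟩
  left_inv h := by
    apply Subtype.ext
    apply Subtype.ext
    exact (cent_u_entries h h.2).symm
  right_inv y := by
    simp
  map_mul' h₁ h₂ := by
    have c1 := cent_u_entries h₁ h₁.2
    have c2 := cent_u_entries h₂ h₂.2
    have key : (((h₁ * h₂ : _) : G) : Matrix (Fin 2) (Fin 2) kbar) 0 1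
        = ((h₁ : G) : Matrix (Fin 2) (Fin 2) kbar) 0 1
          + ((h₂ : G) : Matrix (Fin 2) (Fin 2) kbar) 0 1 := by
      have hm : (((h₁ * h₂ : _) : G) : Matrix (Fin 2) (Fin 2) kbar)
          = ((h₁ : G) : Matrix (Fin 2) (Fin 2) kbar)
            * ((h₂ : G) : Matrix (Fin 2) (Fin 2) kbar) := rfl
      rw [c1, c2, Matrix.mul_fin_two] at hm
      rw [hm]
      simp
      ring
    exact (congrArg Multiplicative.ofAdd key).trans (ofAdd_add _ _)

private lemma centralizer_conj {H : Type*} [Group H] (c x : H) :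
    Subgroup.centralizer ({c * x * c⁻¹} : Set H)
      = Subgroup.map ((MulAut.conj c : H ≃* H) : H →* H)
          (Subgroup.centralizer ({x} : Set H)) := by
  ext y
  simp only [Subgroup.mem_map, Subgroup.mem_centralizer_singleton_iff]
  constructor
  · intro hy
    refine ⟨c⁻¹ * y * c, ?_, ?_⟩
    · have e1 : c⁻¹ * y * c * x = c⁻¹ * (y * (c * x * c⁻¹)) * c := by group
      rw [e1, hy]
      group
    · show c * (c⁻¹ * y * c) * c⁻¹ = y
      group
  · rintro ⟨z, hz, rfl⟩
    show (c * z * c⁻¹) * (c * x * c⁻¹) = (c * x * c⁻¹) * (c * z * c⁻¹)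
    have e1 : (c * z * c⁻¹) * (c * x * c⁻¹) = c * (z * x) * c⁻¹ := by group
    rw [e1, hz]
    group

set_option maxHeartbeats 1000000 in
private lemma conj_exists (g : G) (hg : orderOf g = 2) : ∃ c : G, g = c * uu * c⁻¹ := by
  have hsqG : g * g = 1 := by
    have := pow_orderOf_eq_one g
    rwa [hg, pow_two] at this
  have hne : g ≠ 1 := by
    intro h
    rw [h, orderOf_one] at hg
    norm_num at hg
  set M := (g : Matrix (Fin 2) (Fin 2) kbar) with hMdef
  have hdet : M 0 0 * M 1 1 - M 0 1 * M 1 0 = 1 := by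
    have := g.2; rw [Matrix.det_fin_two] at this; exact this
  have hsq : M * M = 1 := by
    have := congrArg (Subtype.val) hsqG
    simpa using this
  rw [Matrix.eta_fin_two M, Matrix.mul_fin_two, Matrix.one_fin_two] at hsq
  have e := fun i j => (Matrix.ext_iff.mpr hsq) i j
  have e00 := e 0 0; have e01 := e 0 1; have e10 := e 1 0; have e11 := e 1 1
  simp at e00 e01 e10 e11
  by_cases hb : M 0 1 ≠ 0
  · obtain ⟨l, hl⟩ := IsAlgClosed.exists_pow_nat_eq (M 0 1)⁻¹ (n := 2) (by norm_num)
    have hdetC : Matrix.det !![l * M 0 1, 0; l * (M 1 1 + 1), l] = 1 := by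
      rw [Matrix.det_fin_two_of]
      have hinv := inv_mul_cancel₀ hb
      linear_combination M 0 1 * hl + hinv
    refine ⟨⟨!![l * M 0 1, 0; l * (M 1 1 + 1), l], hdetC⟩, ?_⟩
    apply eq_mul_inv_iff_mul_eq.mpr
    apply Subtype.ext
    show M * !![l * M 0 1, 0; l * (M 1 1 + 1), l]
        = !![l * M 0 1, 0; l * (M 1 1 + 1), l] * !![1,1;0,1]
    rw [Matrix.eta_fin_two M, Matrix.mul_fin_two, Matrix.mul_fin_two]
    refine Matrix.ext fun i j => ?_
    fin_cases i <;> fin_cases j <;> simp only [Matrix.cons_val', Matrix.cons_val_zero, Matrix.cons_val_one, Matrix.head_cons, Matrix.head_fin_const, Matrix.empty_val', Matrix.cons_val_fin_one, Matrix.of_apply, Fin.mk_zero, Fin.mk_one] <;>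
      first
        | linear_combination l * e01
        | linear_combination l * e11
        | linear_combination l * k2
        | linear_combination (-l) * k2
        | ring
  · push_neg at hb
    have ha : M 0 0 = 1 := by apply kbar_sq_eq_one; linear_combination e00 - M 1 0 * hb
    have hd : M 1 1 = 1 := by apply kbar_sq_eq_one; linear_combination e11 - M 1 0 * hb
    have hc : M 1 0 ≠ 0 := by
      intro h0
      apply hne
      apply Subtype.ext
      show M = 1
      rw [Matrix.eta_fin_two M, Matrix.one_fin_two, ha, hb, h0, hd]
    obtain ⟨m, hm⟩ := IsAlgClosed.exists_pow_nat_eq (M 1 0)⁻¹ (n := 2) (by norm_num)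
    have hdetC : Matrix.det !![(0:kbar), m; m * M 1 0, 0] = 1 := by
      rw [Matrix.det_fin_two_of]
      have hinv := inv_mul_cancel₀ hc
      linear_combination -(M 1 0 * hm) - hinv - k2
    refine ⟨⟨!![(0:kbar), m; m * M 1 0, 0], hdetC⟩, ?_⟩
    apply eq_mul_inv_iff_mul_eq.mpr
    apply Subtype.ext
    show M * !![(0:kbar), m; m * M 1 0, 0]
        = !![(0:kbar), m; m * M 1 0, 0] * !![1,1;0,1]
    rw [Matrix.eta_fin_two M, Matrix.mul_fin_two, Matrix.mul_fin_two]
    refine Matrix.ext fun i j => ?_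
    fin_cases i <;> fin_cases j <;> simp only [Matrix.cons_val', Matrix.cons_val_zero, Matrix.cons_val_one, Matrix.head_cons, Matrix.head_fin_const, Matrix.empty_val', Matrix.cons_val_fin_one, Matrix.of_apply, Fin.mk_zero, Fin.mk_one] <;>
      first
        | linear_combination m * M 1 0 * hb
        | linear_combination (-(m * M 1 0)) * hb
        | linear_combination m * ha
        | linear_combination (-m) * ha
        | linear_combination m * M 1 0 * hd
        | linear_combination (-(m * M 1 0)) * hd
        | ring

/-- If `g ∈ G = SL₂(kbar)` has order `2`, then its centralizer in `G` is isomorphic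
to the additive group of `kbar`. -/
theorem SL2_centralizer_order_two (g : G) (hg : orderOf g = 2) :
    Nonempty (↥(Subgroup.centralizer ({g} : Set G)) ≃* Multiplicative kbar) := by
  obtain ⟨c, rfl⟩ := conj_exists g hg
  have hmap := centralizer_conj c uu
  exact ⟨(MulEquiv.subgroupCongr hmap).trans
    (((MulAut.conj c : G ≃* G).subgroupMap (Subgroup.centralizer ({uu} : Set G))).symm.trans
      eqUnip)⟩
end

section
/- Let K be a field of characteristic 2 that is not co-Hopfian as a ring, i.e., there exists a ring homomorphism K → K that is not surjective. Then SL₂(K) is not a Turner group: there exists g ∈ SL₂(K) such that g lies in no proper retract of SL₂(K), and yet there exists a group endomorphism of SL₂(K) fixing g that is not an automorphism (not bijective). -/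
set_option linter.unusedSectionVars false
set_option maxHeartbeats 1000000
open Matrix
namespace SL2Aux
variable {K : Type*} [Field K] [CharP K 2]

def E (t : K) : Matrix.SpecialLinearGroup (Fin 2) K :=
  ⟨!![1, t; 0, 1], by simp [Matrix.det_fin_two_of]⟩

@[simp] lemma coe_E (t : K) : (E t : Matrix (Fin 2) (Fin 2) K) = !![1, t; 0, 1] := rfl

lemma E_mul (u v : K) : E u * E v = E (u + v) := by
  ext i j
  fin_cases i <;> fin_cases j <;>
    simp [Matrix.SpecialLinearGroup.coe_mul, Matrix.mul_fin_two]
  ring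

@[simp] lemma E_zero : (E 0 : Matrix.SpecialLinearGroup (Fin 2) K) = 1 := by
  ext i j
  fin_cases i <;> fin_cases j <;> simp [E]

@[simp] lemma E_inv (t : K) : (E t)⁻¹ = E (-t) := by
  rw [eq_comm, eq_inv_iff_mul_eq_one, E_mul]
  simp

def F (t : K) : Matrix.SpecialLinearGroup (Fin 2) K :=
  ⟨!![1, 0; t, 1], by simp [Matrix.det_fin_two_of]⟩

@[simp] lemma coe_F (t : K) : (F t : Matrix (Fin 2) (Fin 2) K) = !![1, 0; t, 1] := rfl

lemma F_mul (u v : K) : F u * F v = F (u + v) := by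
  ext i j
  fin_cases i <;> fin_cases j <;>
    simp [Matrix.SpecialLinearGroup.coe_mul, Matrix.mul_fin_two]
  try ring

@[simp] lemma F_zero : (F 0 : Matrix.SpecialLinearGroup (Fin 2) K) = 1 := by
  ext i j
  fin_cases i <;> fin_cases j <;> simp [F]

@[simp] lemma F_inv (t : K) : (F t)⁻¹ = F (-t) := by
  rw [eq_comm, eq_inv_iff_mul_eq_one, F_mul]
  simp

def Cm (γ τ : K) (h : γ ≠ 0) : Matrix.SpecialLinearGroup (Fin 2) K :=
  ⟨!![0, -γ⁻¹; γ, τ], by simp [Matrix.det_fin_two_of, inv_mul_cancel₀ h]⟩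

@[simp] lemma coe_Cm (γ τ : K) (h : γ ≠ 0) :
    (Cm γ τ h : Matrix (Fin 2) (Fin 2) K) = !![0, -γ⁻¹; γ, τ] := rfl

@[simp] lemma coe_Cm_inv (γ τ : K) (h : γ ≠ 0) :
    (((Cm γ τ h)⁻¹ : Matrix.SpecialLinearGroup (Fin 2) K) : Matrix (Fin 2) (Fin 2) K) =
      !![τ, γ⁻¹; -γ, 0] := by
  show (((Cm γ τ h)⁻¹ : Matrix.SpecialLinearGroup (Fin 2) K)).val = _
  rw [Matrix.SpecialLinearGroup.coe_inv]
  show Matrix.adjugate !![0, -γ⁻¹; γ, τ] = _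
  rw [Matrix.adjugate_fin_two_of]
  norm_num

def D (δ : K) (h : δ ≠ 0) : Matrix.SpecialLinearGroup (Fin 2) K :=
  ⟨!![δ, 0; 0, δ⁻¹], by simp [Matrix.det_fin_two_of, mul_inv_cancel₀ h]⟩

@[simp] lemma coe_D (δ : K) (h : δ ≠ 0) :
    (D δ h : Matrix (Fin 2) (Fin 2) K) = !![δ, 0; 0, δ⁻¹] := rfl

@[simp] lemma coe_D_inv (δ : K) (h : δ ≠ 0) :
    (((D δ h)⁻¹ : Matrix.SpecialLinearGroup (Fin 2) K) : Matrix (Fin 2) (Fin 2) K) =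
      !![δ⁻¹, 0; 0, δ] := by
  show (((D δ h)⁻¹ : Matrix.SpecialLinearGroup (Fin 2) K)).val = _
  rw [Matrix.SpecialLinearGroup.coe_inv]
  show Matrix.adjugate !![δ, 0; 0, δ⁻¹] = _
  rw [Matrix.adjugate_fin_two_of]
  norm_num

def P (a c d : K) (hc : c ≠ 0) : Matrix.SpecialLinearGroup (Fin 2) K :=
  ⟨!![a, (a*d-1)/c; c, d], by simp [Matrix.det_fin_two_of]; field_simp; ring⟩

@[simp] lemma coe_P (a c d : K) (hc : c ≠ 0) :
    (P a c d hc : Matrix (Fin 2) (Fin 2) K) = !![a, (a*d-1)/c; c, d] := rfl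

@[simp] lemma coe_P_inv (a c d : K) (hc : c ≠ 0) :
    ((P a c d hc)⁻¹ : Matrix.SpecialLinearGroup (Fin 2) K) = P d (-c) a (neg_ne_zero.2 hc) := by
  apply Subtype.ext
  show ((P a c d hc)⁻¹ : Matrix.SpecialLinearGroup (Fin 2) K).val = _
  rw [Matrix.SpecialLinearGroup.coe_inv]
  show Matrix.adjugate !![a, (a*d-1)/c; c, d] = !![d, ((d*a-1))/(-c); -c, a]
  rw [Matrix.adjugate_fin_two_of]
  ext i j
  fin_cases i <;> fin_cases j <;> simp
  ring_nf

lemma eq_P (M : Matrix.SpecialLinearGroup (Fin 2) K)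
    (hC : (M : Matrix (Fin 2) (Fin 2) K) 1 0 ≠ 0) :
    M = P ((M : Matrix (Fin 2) (Fin 2) K) 0 0) ((M : Matrix (Fin 2) (Fin 2) K) 1 0)
          ((M : Matrix (Fin 2) (Fin 2) K) 1 1) hC := by
  have hdet := M.2
  rw [Matrix.det_fin_two] at hdet
  ext i j
  fin_cases i <;> fin_cases j <;> simp
  field_simp
  linear_combination -hdet

/-- the commutator `[P, E x]` -/
lemma U_eq (a c d x : K) (hc : c ≠ 0) (hx : x ≠ 0) :
    P a c d hc * E x * (P a c d hc)⁻¹ * (E x)⁻¹ =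
      P (1 - a*c*x) (-(c*c*x)) (1 + a*c*x + c*c*x*x)
        (neg_ne_zero.2 (mul_ne_zero (mul_ne_zero hc hc) hx)) := by
  rw [coe_P_inv, E_inv]
  ext i j
  fin_cases i <;> fin_cases j <;>
    simp [Matrix.SpecialLinearGroup.coe_mul, Matrix.mul_fin_two]
  all_goals try field_simp
  all_goals try ring
  all_goals try field_simp
  all_goals try ring

lemma conj_P (a c d : K) (hc : c ≠ 0) :
    (E (a/c))⁻¹ * P a c d hc * E (a/c) = Cm c (a + d) hc := by
  rw [E_inv]
  ext i j
  fin_cases i <;> fin_cases j <;>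
    simp [Matrix.SpecialLinearGroup.coe_mul, Matrix.mul_fin_two]
  all_goals try field_simp
  all_goals try ring

lemma conj_D (γ τ δ : K) (hγ : γ ≠ 0) (hδ : δ ≠ 0) :
    D δ hδ * Cm γ τ hγ * (D δ hδ)⁻¹ =
      Cm (γ/(δ*δ)) τ (div_ne_zero hγ (mul_ne_zero hδ hδ)) := by
  ext i j
  fin_cases i <;> fin_cases j <;>
    simp [Matrix.SpecialLinearGroup.coe_mul, Matrix.mul_fin_two]
  all_goals try field_simp

lemma Cm_inv_mul (γ τ τ' : K) (hγ : γ ≠ 0) :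
    (Cm γ τ hγ)⁻¹ * Cm γ τ' hγ = E ((τ' - τ)/γ) := by
  ext i j
  fin_cases i <;> fin_cases j <;>
    simp [Matrix.SpecialLinearGroup.coe_mul, Matrix.mul_fin_two]
  all_goals try field_simp
  all_goals try ring

lemma P_decomp (a c d : K) (hc : c ≠ 0) :
    P a c d hc = E ((a-1)/c) * F c * E ((d-1)/c) := by
  ext i j
  fin_cases i <;> fin_cases j <;>
    simp [Matrix.SpecialLinearGroup.coe_mul, Matrix.mul_fin_two]
  all_goals try field_simp
  all_goals try ring

lemma conj_F (t : K) :
    Cm 1 0 one_ne_zero * E t * (Cm 1 0 one_ne_zero)⁻¹ = F (-t) := by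
  ext i j
  fin_cases i <;> fin_cases j <;>
    simp [Matrix.SpecialLinearGroup.coe_mul, Matrix.mul_fin_two]


lemma Cm_congr {γ γ' τ τ' : K} (h : γ ≠ 0) (h' : γ' ≠ 0) (e1 : γ = γ') (e2 : τ = τ') :
    Cm γ τ h = Cm γ' τ' h' := by subst e1; subst e2; rfl

lemma entry10_mul_F (M : Matrix.SpecialLinearGroup (Fin 2) K) (t : K) :
    ((M * F t : Matrix.SpecialLinearGroup (Fin 2) K) : Matrix (Fin 2) (Fin 2) K) 1 0 =
      (M : Matrix (Fin 2) (Fin 2) K) 1 0 + (M : Matrix (Fin 2) (Fin 2) K) 1 1 * t := by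
  have h : ((M * F t : Matrix.SpecialLinearGroup (Fin 2) K) : Matrix (Fin 2) (Fin 2) K) =
      (M : Matrix (Fin 2) (Fin 2) K) * !![1, 0; t, 1] := by
    simp [Matrix.SpecialLinearGroup.coe_mul]
  rw [h, Matrix.eta_fin_two (M : Matrix (Fin 2) (Fin 2) K), Matrix.mul_fin_two]
  simp

lemma conjF_entry10 (M : Matrix.SpecialLinearGroup (Fin 2) K) (t : K) :
    ((F t * M * (F t)⁻¹ : Matrix.SpecialLinearGroup (Fin 2) K) : Matrix (Fin 2) (Fin 2) K) 1 0 =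
      (M : Matrix (Fin 2) (Fin 2) K) 1 0 +
        t * ((M : Matrix (Fin 2) (Fin 2) K) 0 0 - (M : Matrix (Fin 2) (Fin 2) K) 1 1)
        - t * t * (M : Matrix (Fin 2) (Fin 2) K) 0 1 := by
  rw [F_inv]
  have h : ((F t * M * F (-t) : Matrix.SpecialLinearGroup (Fin 2) K) : Matrix (Fin 2) (Fin 2) K) =
      !![1, 0; t, 1] * (M : Matrix (Fin 2) (Fin 2) K) * !![1, 0; -t, 1] := by
    simp [Matrix.SpecialLinearGroup.coe_mul]
  rw [h, Matrix.eta_fin_two (M : Matrix (Fin 2) (Fin 2) K), Matrix.mul_fin_two,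
    Matrix.mul_fin_two]
  simp
  ring

lemma exists_entry10_ne_zero [Infinite K] (N : Subgroup (Matrix.SpecialLinearGroup (Fin 2) K))
    [hNorm : N.Normal] (A : Matrix.SpecialLinearGroup (Fin 2) K) (hA : A ∈ N) (hA1 : A ≠ 1) :
    ∃ B ∈ N, (B : Matrix (Fin 2) (Fin 2) K) 1 0 ≠ 0 := by
  classical
  have h2 : (2 : K) = 0 := CharTwo.two_eq_zero
  by_cases hc : (A : Matrix (Fin 2) (Fin 2) K) 1 0 ≠ 0
  · exact ⟨A, hA, hc⟩
  push_neg at hc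
  have hdet := A.2
  rw [Matrix.det_fin_two, hc, mul_zero, sub_zero] at hdet
  rcases eq_or_ne ((A : Matrix (Fin 2) (Fin 2) K) 0 1) 0 with hb0 | hb0
  · by_cases had : (A : Matrix (Fin 2) (Fin 2) K) 0 0 = (A : Matrix (Fin 2) (Fin 2) K) 1 1
    · exfalso
      apply hA1
      rw [← had] at hdet
      have ha1 : (A : Matrix (Fin 2) (Fin 2) K) 0 0 = 1 := by
        have hz : ((A : Matrix (Fin 2) (Fin 2) K) 0 0 + 1) *
            ((A : Matrix (Fin 2) (Fin 2) K) 0 0 + 1) = 0 := by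
          linear_combination hdet + (A : Matrix (Fin 2) (Fin 2) K) 0 0 * h2 + h2
        have := mul_self_eq_zero.mp hz
        linear_combination this - h2
      ext i j
      fin_cases i <;> fin_cases j
      · show (A : Matrix (Fin 2) (Fin 2) K) 0 0 = _; rw [ha1]; simp
      · show (A : Matrix (Fin 2) (Fin 2) K) 0 1 = _; rw [hb0]; simp
      · show (A : Matrix (Fin 2) (Fin 2) K) 1 0 = _; rw [hc]; simp
      · show (A : Matrix (Fin 2) (Fin 2) K) 1 1 = _; rw [← had, ha1]; simp
    · refine ⟨F 1 * A * (F 1)⁻¹, hNorm.conj_mem A hA (F 1), ?_⟩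
      rw [conjF_entry10, hc, hb0]
      simpa [sub_ne_zero] using had
  · obtain ⟨t, ht⟩ := Infinite.exists_notMem_finset
      ({0, ((A : Matrix (Fin 2) (Fin 2) K) 0 0 - (A : Matrix (Fin 2) (Fin 2) K) 1 1) /
        (A : Matrix (Fin 2) (Fin 2) K) 0 1} : Finset K)
    simp only [Finset.mem_insert, Finset.mem_singleton, not_or] at ht
    refine ⟨F t * A * (F t)⁻¹, hNorm.conj_mem A hA (F t), ?_⟩
    rw [conjF_entry10, hc]
    intro hzero
    apply ht.2
    have hfac : t * (((A : Matrix (Fin 2) (Fin 2) K) 0 0 - (A : Matrix (Fin 2) (Fin 2) K) 1 1)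
        - t * (A : Matrix (Fin 2) (Fin 2) K) 0 1) = 0 := by
      linear_combination hzero
    rcases mul_eq_zero.mp hfac with h | h
    · exact absurd h ht.1
    · rw [eq_div_iff hb0]
      linear_combination -h

theorem normal_eq_top [Infinite K] (N : Subgroup (Matrix.SpecialLinearGroup (Fin 2) K))
    [hNorm : N.Normal] (hN : N ≠ ⊥) : N = ⊤ := by
  classical
  obtain ⟨⟨A, hAN⟩, hA1⟩ := Subgroup.ne_bot_iff_exists_ne_one.mp hN
  have hA1' : A ≠ 1 := by
    intro h; exact hA1 (Subtype.ext h)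
  obtain ⟨B, hBN, hc⟩ := exists_entry10_ne_zero N A hAN hA1'
  set a := (B : Matrix (Fin 2) (Fin 2) K) 0 0 with ha
  set c := (B : Matrix (Fin 2) (Fin 2) K) 1 0 with hcdef
  set d := (B : Matrix (Fin 2) (Fin 2) K) 1 1 with hd
  have hBP : B = P a c d hc := eq_P B hc
  have h2 : (2 : K) = 0 := CharTwo.two_eq_zero
  have hE : ∀ t : K, E t ∈ N := by
    intro t
    rcases eq_or_ne t 0 with rfl | ht
    · rw [E_zero]; exact N.one_mem
    obtain ⟨α, hα⟩ := Infinite.exists_notMem_finset ({0, 1} : Finset K)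
    simp only [Finset.mem_insert, Finset.mem_singleton, not_or] at hα
    obtain ⟨hα0, hα1⟩ := hα
    have hβ0 : α + 1 ≠ 0 := by
      intro h
      apply hα1
      linear_combination h - h2
    have key : ∀ (x δ : K) (hx : x ≠ 0) (hδ : δ ≠ 0),
        Cm ((-(c*c*x))/(δ*δ)) ((1 - a*c*x) + (1 + a*c*x + c*c*x*x))
          (div_ne_zero (neg_ne_zero.2 (mul_ne_zero (mul_ne_zero hc hc) hx))
            (mul_ne_zero hδ hδ)) ∈ N := by
      intro x δ hx hδ
      have hU : B * E x * B⁻¹ * (E x)⁻¹ ∈ N := by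
        have h1 : B * (E x * B⁻¹ * (E x)⁻¹) ∈ N :=
          N.mul_mem hBN (by
            have := hNorm.conj_mem B⁻¹ (N.inv_mem hBN) (E x)
            simpa [mul_assoc] using this)
        simpa [mul_assoc] using h1
      rw [hBP, U_eq a c d x hc hx] at hU
      have hc' := neg_ne_zero.2 (mul_ne_zero (mul_ne_zero hc hc) hx)
      have hmem2 : (E ((1 - a*c*x)/(-(c*c*x))))⁻¹ *
          P (1 - a*c*x) (-(c*c*x)) (1 + a*c*x + c*c*x*x) hc' *
          E ((1 - a*c*x)/(-(c*c*x))) ∈ N := by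
        have := hNorm.conj_mem _ hU ((E ((1 - a*c*x)/(-(c*c*x))))⁻¹)
        simpa [mul_assoc] using this
      rw [conj_P (1 - a*c*x) (-(c*c*x)) (1 + a*c*x + c*c*x*x) hc'] at hmem2
      have hmem3 := hNorm.conj_mem _ hmem2 (D δ hδ)
      rw [conj_D] at hmem3
      exact hmem3
    have hx1 : t*α*α ≠ 0 := by simp [ht, hα0]
    have hx2 : t*(α+1)*(α+1) ≠ 0 := by simp [ht, hβ0]
    have hmem1 := key (t*α*α) α hx1 hα0
    have hmem2 := key (t*(α+1)*(α+1)) (α+1) hx2 hβ0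
    have hγ : -(c*c*t) ≠ 0 := neg_ne_zero.2 (mul_ne_zero (mul_ne_zero hc hc) ht)
    have e1 : Cm ((-(c*c*(t*α*α)))/(α*α)) _
        (div_ne_zero (neg_ne_zero.2 (mul_ne_zero (mul_ne_zero hc hc) hx1))
          (mul_ne_zero hα0 hα0)) =
        Cm (-(c*c*t)) ((1 - a*c*(t*α*α)) + (1 + a*c*(t*α*α) + c*c*(t*α*α)*(t*α*α))) hγ :=
      Cm_congr _ _ (by field_simp) rfl
    have e2 : Cm ((-(c*c*(t*(α+1)*(α+1))))/((α+1)*(α+1))) _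
        (div_ne_zero (neg_ne_zero.2 (mul_ne_zero (mul_ne_zero hc hc) hx2))
          (mul_ne_zero hβ0 hβ0)) =
        Cm (-(c*c*t)) ((1 - a*c*(t*(α+1)*(α+1))) +
          (1 + a*c*(t*(α+1)*(α+1)) + c*c*(t*(α+1)*(α+1))*(t*(α+1)*(α+1)))) hγ :=
      Cm_congr _ _ (by field_simp) rfl
    rw [e1] at hmem1
    rw [e2] at hmem2
    have hfinal := N.mul_mem (N.inv_mem hmem1) hmem2
    rw [Cm_inv_mul] at hfinal
    have hval : (((1 - a*c*(t*(α+1)*(α+1))) +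
          (1 + a*c*(t*(α+1)*(α+1)) + c*c*(t*(α+1)*(α+1))*(t*(α+1)*(α+1)))) -
        ((1 - a*c*(t*α*α)) + (1 + a*c*(t*α*α) + c*c*(t*α*α)*(t*α*α))))/(-(c*c*t)) = t := by
      rw [div_eq_iff hγ]
      linear_combination ((2*α^3 + 3*α^2 + 2*α + 1) * c^2 * t^2) * h2
    rwa [hval] at hfinal
  have hF : ∀ t : K, F t ∈ N := by
    intro t
    have hconj := conj_F (K := K) (-t)
    rw [neg_neg] at hconj
    rw [← hconj]
    exact hNorm.conj_mem _ (hE _) _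
  rw [Subgroup.eq_top_iff']
  intro M
  by_cases hM : (M : Matrix (Fin 2) (Fin 2) K) 1 0 ≠ 0
  · rw [eq_P M hM, P_decomp]
    exact N.mul_mem (N.mul_mem (hE _) (hF _)) (hE _)
  · push_neg at hM
    have hdet := M.2
    rw [Matrix.det_fin_two, hM, mul_zero, sub_zero] at hdet
    have hd2 : (M : Matrix (Fin 2) (Fin 2) K) 1 1 ≠ 0 := by
      intro h; rw [h, mul_zero] at hdet; exact zero_ne_one hdet
    have h1 : ((M * F 1 : Matrix.SpecialLinearGroup (Fin 2) K) : Matrix (Fin 2) (Fin 2) K) 1 0 ≠ 0 := by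
      rw [entry10_mul_F, hM]
      simpa using hd2
    have hMF : M * F 1 ∈ N := by
      rw [eq_P _ h1, P_decomp]
      exact N.mul_mem (N.mul_mem (hE _) (hF _)) (hE _)
    have hM1 : M = (M * F 1) * (F 1)⁻¹ := by group
    rw [hM1]
    exact N.mul_mem hMF (N.inv_mem (hF 1))

end SL2Aux

/-- If `K` is a field of characteristic `2` that is not co-Hopfian as a ring (it
admits a non-surjective ring endomorphism), then `SL₂(K)` is not a Turner group:
some element of `SL₂(K)` lies in no proper retract, yet is fixed by an endomorphism
of `SL₂(K)` that is not an automorphism. -/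
theorem SL2_not_turner_of_not_coHopfian_field (K : Type*) [Field K] [CharP K 2]
    (hK : ∃ f : K →+* K, ¬ Function.Surjective f) :
    ∃ g : Matrix.SpecialLinearGroup (Fin 2) K,
      (∀ r : Matrix.SpecialLinearGroup (Fin 2) K →* Matrix.SpecialLinearGroup (Fin 2) K,
        r.comp r = r → r.range ≠ ⊤ → g ∉ r.range) ∧
      ∃ φ : Matrix.SpecialLinearGroup (Fin 2) K →* Matrix.SpecialLinearGroup (Fin 2) K,
        φ g = g ∧ ¬ Function.Bijective φ := by
  classical
  obtain ⟨f, hf⟩ := hK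
  have hinj : Function.Injective f := f.injective
  have hinf : Infinite K := by
    by_contra h
    rw [not_infinite_iff_finite] at h
    exact hf (Finite.injective_iff_surjective.mp hinj)
  refine ⟨SL2Aux.E 1, ?_, ?_⟩
  · intro r hr hrange hgmem
    obtain ⟨h, hh⟩ := hgmem
    have hfix : r (SL2Aux.E 1) = SL2Aux.E 1 := by
      conv_lhs => rw [← hh]
      rw [← MonoidHom.comp_apply, hr, hh]
    by_cases hker : r.ker = ⊥
    · apply hrange
      rw [MonoidHom.range_eq_top]
      intro y
      have hinj' : Function.Injective r := (MonoidHom.ker_eq_bot_iff r).mp hker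
      refine ⟨y, hinj' ?_⟩
      rw [← MonoidHom.comp_apply, hr]
    · have htop := SL2Aux.normal_eq_top r.ker hker
      have hg1 : r (SL2Aux.E 1) = 1 := by
        have hmem : SL2Aux.E 1 ∈ r.ker := by rw [htop]; exact Subgroup.mem_top _
        exact MonoidHom.mem_ker.mp hmem
      rw [hfix] at hg1
      have hcontra := congrArg (fun M : Matrix.SpecialLinearGroup (Fin 2) K =>
        (M : Matrix (Fin 2) (Fin 2) K) 0 1) hg1
      simp at hcontra
  · refine ⟨Matrix.SpecialLinearGroup.map f, ?_, ?_⟩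
    · ext i j
      fin_cases i <;> fin_cases j <;>
        simp [Matrix.SpecialLinearGroup.map_apply_coe]
    · intro hbij
      rw [Function.Surjective] at hf
      push_neg at hf
      obtain ⟨y, hy⟩ := hf
      obtain ⟨M, hM⟩ := hbij.2 (SL2Aux.E y)
      have hentry := congrArg (fun M : Matrix.SpecialLinearGroup (Fin 2) K =>
        (M : Matrix (Fin 2) (Fin 2) K) 0 1) hM
      simp [Matrix.SpecialLinearGroup.map, Matrix.map_apply] at hentry
      exact hy _ hentry
end
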